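/- Let Θ be a 2-local automorphism of B(H) whose restriction to the ideal of finite-rank operators is the identity (Θ(x) = x for all finite-rank x). Then Θ is the identity on all of B(H). -/

import Mathlib

noncomputable section

variable {H : Type*} [NormedAddCommGroup H] [InnerProductSpace ℂ H] [CompleteSpace H]

/-- A bounded operator has finite rank if its range is finite-dimensional. -/
def FiniteRank (x : H →L[ℂ] H) : Prop :=
  FiniteDimensional ℂ (LinearMap.range (x : H →ₗ[ℂ] H))

/-- A 2-local automorphism: at every pair of points it agrees with some
algebra automorphism of `B(H)`. -/
def Is2LocalAutomorphism (Θ : (H →L[ℂ] H) → (H →L[ℂ] H)) : Prop :=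
  ∀ x y : H →L[ℂ] H, ∃ Ψ : (H →L[ℂ] H) ≃ₐ[ℂ] (H →L[ℂ] H), Θ x = Ψ x ∧ Θ y = Ψ y

/-- The canonical trace, computed along a Hilbert basis. -/
def traceAlong {ι : Type*} (β : HilbertBasis ι ℂ H) (x : H →L[ℂ] H) : ℂ :=
  ∑' i, (inner ℂ (β i) (x (β i)) : ℂ)

/-! For the rank-one operator `p = rankOne ξ η` and any `x`, the corner `p x p` equals
`⟪η, x ξ⟫ • p`, so an operator is determined by its corners at rank-one operators. Given `x`,
the automorphism `Ψ` that agrees with `Θ` at `x` and at `p` fixes `p` (as `Θ p = p`), hence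
`p (Θ x) p = Ψ (p x p) = ⟪η, x ξ⟫ • p = p x p`. -/

open InnerProductSpace

theorem mul_map_mul_eq_of_mul_mul_eq_smul {R A F : Type*} [CommSemiring R] [Semiring A]
    [Algebra R A] [FunLike F A A] [AlgHomClass F R A A] (Ψ : F) {p x : A} {c : R}
    (hp : Ψ p = p) (hpxp : p * x * p = c • p) : p * Ψ x * p = p * x * p := by
  calc p * Ψ x * p = Ψ (p * x * p) := by rw [map_mul, map_mul, hp]
    _ = p * x * p := by rw [hpxp, map_smul, hp]

section RankOne

variable {𝕜 E : Type*} [RCLike 𝕜] [NormedAddCommGroup E] [InnerProductSpace 𝕜 E]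

theorem InnerProductSpace.rankOne_mul_mul_rankOne (ξ η : E) (T : E →L[𝕜] E) :
    rankOne 𝕜 ξ η * T * rankOne 𝕜 ξ η = inner 𝕜 η (T ξ) • rankOne 𝕜 ξ η := by
  rw [mul_assoc, ContinuousLinearMap.mul_def, ContinuousLinearMap.mul_def, comp_rankOne,
    rankOne_comp_rankOne]

theorem ContinuousLinearMap.ext_of_rankOne_mul_mul_rankOne {S T : E →L[𝕜] E}
    (h : ∀ ξ η : E, rankOne 𝕜 ξ η * S * rankOne 𝕜 ξ η = rankOne 𝕜 ξ η * T * rankOne 𝕜 ξ η) :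
    S = T := by
  ext ξ
  refine ext_inner_left 𝕜 fun η => ?_
  rcases eq_or_ne ξ 0 with rfl | hξ
  · simp
  rcases eq_or_ne η 0 with rfl | hη
  · simp
  have hcorner := h ξ η
  rw [rankOne_mul_mul_rankOne, rankOne_mul_mul_rankOne] at hcorner
  exact smul_left_injective 𝕜 (rankOne_ne_zero hξ hη) hcorner

end RankOne

omit [CompleteSpace H] in
theorem finiteRank_rankOne (ξ η : H) : FiniteRank (rankOne ℂ ξ η) :=
  Submodule.finiteDimensional_of_le (S₂ := ℂ ∙ ξ) <| by
    rintro _ ⟨z, rfl⟩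
    exact Submodule.smul_mem _ _ (Submodule.mem_span_singleton_self ξ)

theorem twoLocalAutomorphism_eq_id_of_fixes_finiteRank
    (Θ : (H →L[ℂ] H) → (H →L[ℂ] H)) (hΘ : Is2LocalAutomorphism Θ)
    (h : ∀ x : H →L[ℂ] H, FiniteRank x → Θ x = x) : ∀ x : H →L[ℂ] H, Θ x = x := by
  intro x
  refine ContinuousLinearMap.ext_of_rankOne_mul_mul_rankOne fun ξ η => ?_
  obtain ⟨Ψ, hΨx, hΨp⟩ := hΘ x (rankOne ℂ ξ η)
  have hp : Ψ (rankOne ℂ ξ η) = rankOne ℂ ξ η := hΨp ▸ h _ (finiteRank_rankOne ξ η)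
  rw [hΨx]
  exact mul_map_mul_eq_of_mul_mul_eq_smul Ψ hp (rankOne_mul_mul_rankOne ξ η x)
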